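/- Paris's Kummer-type transformation for ₂F₂ with general parameters: for complex a₁, a₂, b₁, b₂ with b₁, b₂ not non-positive integers and all complex x: ₂F₂(a₁,a₂;b₁,b₂;x) = e^x Σ_{j=0}^∞ [(b₁−a₁)_j / (b₁)_j] ((−x)^j/j!) · ₂F₂(a₁, b₂−a₂; b₁+j, b₂; −x). -/

import Mathlib

open scoped BigOperators

/-- Pochhammer symbol (ascending factorial) `(a)_n`. -/
noncomputable def poch (a : ℂ) (n : ℕ) : ℂ := ∏ k ∈ Finset.range n, (a + (k : ℂ))

open Finset Filter
set_option maxHeartbeats 2000000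

lemma poch_zero (a : ℂ) : poch a 0 = 1 := by simp [poch]

lemma poch_succ (a : ℂ) (n : ℕ) : poch a (n + 1) = poch a n * (a + n) := by
  simp [poch, Finset.prod_range_succ]

lemma poch_succ' (a : ℂ) (n : ℕ) : poch a (n + 1) = a * poch (a + 1) n := by
  rw [poch, Finset.prod_range_succ']
  simp only [Nat.cast_zero, add_zero]
  rw [mul_comm]
  congr 1
  rw [poch]
  apply Finset.prod_congr rfl
  intro k _
  push_cast
  ring

lemma poch_add (a : ℂ) (m n : ℕ) : poch a (m + n) = poch a m * poch (a + m) n := by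
  rw [poch, poch, poch, Finset.prod_range_add]
  congr 1
  apply Finset.prod_congr rfl
  intro k _
  push_cast
  ring

lemma poch_ne_zero {a : ℂ} (h : ∀ k : ℕ, a ≠ -(k : ℂ)) (n : ℕ) : poch a n ≠ 0 := by
  rw [poch, Finset.prod_ne_zero_iff]
  intro k _ hk
  exact h k (by linear_combination hk)

lemma norm_poch_ge {a : ℂ} (h : ∀ k : ℕ, (k : ℝ) + 1 ≤ ‖a + (k : ℂ)‖) (n : ℕ) :
    (n.factorial : ℝ) ≤ ‖poch a n‖ := by
  induction n with
  | zero => simp [poch_zero]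
  | succ n ih =>
    rw [poch_succ, norm_mul]
    calc ((n+1).factorial : ℝ) = (n.factorial : ℝ) * ((n:ℝ)+1) := by
          push_cast [Nat.factorial_succ]; ring
    _ ≤ ‖poch a n‖ * ‖a + (n:ℂ)‖ :=
          mul_le_mul ih (h n) (by positivity) (norm_nonneg _)

lemma vandermonde_poly (b : ℂ) : ∀ (N : ℕ) (c : ℂ),
    ∑ j ∈ range (N + 1), (-1 : ℂ) ^ j * (N.choose j : ℂ) * poch b j * poch (c + j) (N - j)
      = poch (c - b) N := by
  intro N
  induction N with
  | zero => intro c; simp [poch_zero]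
  | succ N ih =>
    intro c
    set u : ℕ → ℂ := fun j => (-1 : ℂ) ^ j * (N.choose j : ℂ) * poch b j * poch (c + j) (N + 1 - j) with hu
    set B : ℕ → ℂ := fun j => (-1 : ℂ) ^ j * (N.choose j : ℂ) * poch b (j+1) * poch (c + j + 1) (N - j) with hB
    have step1 : ∑ j ∈ range (N + 1 + 1),
        (-1 : ℂ) ^ j * ((N+1).choose j : ℂ) * poch b j * poch (c + j) (N + 1 - j)
        = ∑ j ∈ range (N + 1 + 1), u j - ∑ j ∈ range (N + 1), B j := by
      rw [Finset.sum_range_succ' _ (N+1), Finset.sum_range_succ' u (N+1)]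
      have hpt : ∀ j, (-1 : ℂ) ^ (j+1) * ((N+1).choose (j+1) : ℂ) * poch b (j+1) *
          poch (c + (j+1 : ℕ)) (N + 1 - (j+1)) = u (j+1) - B j := by
        intro j
        have h1 : N + 1 - (j + 1) = N - j := by omega
        have h2 : (c + ((j+1 : ℕ) : ℂ)) = c + j + 1 := by push_cast; ring
        have h3 : ((N+1).choose (j+1) : ℂ) = (N.choose j : ℂ) + (N.choose (j+1) : ℂ) := by
          rw [Nat.choose_succ_succ]; push_cast; ring
        rw [h1, h2, h3, hu, hB]
        simp only []
        rw [h1]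
        have h4 : (c + ((j+1:ℕ) : ℂ)) = c + j + 1 := h2
        push_cast
        ring
      rw [Finset.sum_congr rfl (fun j _ => hpt j)]
      simp only [Finset.sum_sub_distrib]
      have h0 : (-1 : ℂ) ^ 0 * ((N+1).choose 0 : ℂ) * poch b 0 * poch (c + (0:ℕ)) (N + 1 - 0)
          = u 0 := by simp [hu]
      rw [h0]
      ring
    rw [step1]
    have step2 : ∑ j ∈ range (N + 1 + 1), u j = ∑ j ∈ range (N + 1), u j := by
      rw [Finset.sum_range_succ]
      simp [hu, Nat.choose_succ_self]
    rw [step2, ← Finset.sum_sub_distrib]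
    have step3 : ∀ j ∈ range (N + 1), u j - B j
        = (c - b) * ((-1 : ℂ) ^ j * (N.choose j : ℂ) * poch b j * poch ((c+1) + j) (N - j)) := by
      intro j hj
      have hjN : j ≤ N := by simpa [Nat.lt_succ_iff] using hj
      have h1 : N + 1 - j = (N - j) + 1 := by omega
      have h2 : poch (c + j) ((N - j) + 1) = (c + j) * poch ((c + 1) + j) (N - j) := by
        rw [poch_succ']
        congr 2
        ring
      have h3 : poch b (j + 1) = poch b j * (b + j) := poch_succ b j
      have h4 : poch (c + j + 1) (N - j) = poch ((c+1) + j) (N - j) := by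
        congr 1
        ring
      rw [hu, hB]
      simp only []
      rw [h1, h2, h3, h4]
      ring
    rw [Finset.sum_congr rfl step3, ← Finset.mul_sum, ih (c + 1)]
    have : c + 1 - b = (c - b) + 1 := by ring
    rw [this, ← poch_succ']

lemma vandermonde_div (N : ℕ) (b c : ℂ) (hc : ∀ k : ℕ, c ≠ -(k : ℂ)) :
    ∑ j ∈ range (N + 1), (-1 : ℂ) ^ j * poch b j /
        (poch c j * (Nat.factorial j : ℂ) * (Nat.factorial (N - j) : ℂ))
      = poch (c - b) N / (poch c N * (Nat.factorial N : ℂ)) := by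
  rw [eq_div_iff (by
    exact mul_ne_zero (poch_ne_zero hc N) (Nat.cast_ne_zero.mpr (Nat.factorial_ne_zero N)))]
  rw [Finset.sum_mul]
  rw [← vandermonde_poly b N c]
  apply Finset.sum_congr rfl
  intro j hj
  have hjN : j ≤ N := by simpa [Nat.lt_succ_iff] using hj
  have hsplit : poch c N = poch c j * poch (c + j) (N - j) := by
    have h : j + (N - j) = N := by omega
    calc poch c N = poch c (j + (N-j)) := by rw [h]
    _ = poch c j * poch (c + j) (N - j) := poch_add c j (N-j)
  have hfac : (N.factorial : ℂ) = (N.choose j : ℂ) * (j.factorial : ℂ) * ((N-j).factorial : ℂ) := by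
    rw [← Nat.cast_mul, ← Nat.cast_mul, ← Nat.choose_mul_factorial_mul_factorial hjN]
  rw [hsplit, hfac]
  have h1 : poch c j ≠ 0 := poch_ne_zero hc j
  have h2 : (j.factorial : ℂ) ≠ 0 := Nat.cast_ne_zero.mpr (Nat.factorial_ne_zero j)
  have h3 : ((N-j).factorial : ℂ) ≠ 0 := Nat.cast_ne_zero.mpr (Nat.factorial_ne_zero _)
  field_simp

lemma triangle (f : ℕ → ℕ → ℂ) (n : ℕ) :
    ∑ m ∈ range (n+1), ∑ j ∈ range (m+1), f j (m - j)
      = ∑ j ∈ range (n+1), ∑ i ∈ range (n+1-j), f j i := by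
  induction n with
  | zero => simp
  | succ n ih =>
    rw [Finset.sum_range_succ _ (n+1), ih]
    rw [Finset.sum_range_succ (fun j => ∑ i ∈ range (n+1+1-j), f j i) (n+1)]
    have h1 : ∀ j ∈ range (n+1), ∑ i ∈ range (n+1+1-j), f j i
        = (∑ i ∈ range (n+1-j), f j i) + f j (n+1-j) := by
      intro j hj
      have h : n+1+1-j = (n+1-j)+1 := by
        have := Finset.mem_range.mp hj; omega
      rw [h, Finset.sum_range_succ]
    rw [Finset.sum_congr rfl h1, Finset.sum_add_distrib]
    rw [Finset.sum_range_succ (fun j => f j (n+1-j)) (n+1)]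
    simp only [Nat.add_sub_cancel_left, Nat.sub_self]
    rw [Finset.sum_range_one]
    ring

lemma coeff_id (a₁ a₂ b₁ b₂ : ℂ) (hb₁ : ∀ k : ℕ, b₁ ≠ -(k : ℂ))
    (hb₂ : ∀ k : ℕ, b₂ ≠ -(k : ℂ)) (n : ℕ) :
    ∑ m ∈ range (n+1), ∑ i ∈ range (m+1),
      (-1:ℂ)^(i+(m-i)) * poch (b₁-a₁) (m-i) * poch a₁ i * poch (b₂-a₂) i /
        (poch b₁ (m-i) * poch (b₁+((m-i:ℕ)):ℂ) i * poch b₂ i * ((m-i).factorial:ℂ) *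
          (i.factorial:ℂ) * ((n-i-(m-i)).factorial:ℂ))
      = poch a₁ n * poch a₂ n / (poch b₁ n * poch b₂ n * (n.factorial:ℂ)) := by
  have htr := triangle (fun i j => (-1:ℂ)^(i+j) * poch (b₁-a₁) j * poch a₁ i * poch (b₂-a₂) i /
        (poch b₁ j * poch (b₁+(j:ℂ)) i * poch b₂ i * (j.factorial:ℂ) * (i.factorial:ℂ) *
          ((n-i-j).factorial:ℂ))) n
  rw [htr]
  have hfac : ∀ m : ℕ, ((m.factorial:ℂ)) ≠ 0 :=
    fun m => Nat.cast_ne_zero.mpr (Nat.factorial_ne_zero m)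
  have hb₁i : ∀ i : ℕ, ∀ k : ℕ, b₁ + (i:ℂ) ≠ -(k:ℂ) := by
    intro i k h
    exact hb₁ (k + i) (by push_cast; linear_combination h)
  have inner_eq : ∀ i ∈ range (n+1),
      ∑ j ∈ range (n+1-i),
        (-1:ℂ)^(i+j) * poch (b₁-a₁) j * poch a₁ i * poch (b₂-a₂) i /
          (poch b₁ j * poch (b₁+(j:ℂ)) i * poch b₂ i * (j.factorial:ℂ) * (i.factorial:ℂ) *
            ((n-i-j).factorial:ℂ))
      = (poch a₁ n / poch b₁ n) *
          ((-1:ℂ)^i * poch (b₂-a₂) i / (poch b₂ i * (i.factorial:ℂ) * ((n-i).factorial:ℂ))) := by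
    intro i hi
    have hin : i ≤ n := by simpa [Nat.lt_succ_iff] using hi
    have hstep : ∀ j ∈ range (n+1-i),
        (-1:ℂ)^(i+j) * poch (b₁-a₁) j * poch a₁ i * poch (b₂-a₂) i /
          (poch b₁ j * poch (b₁+(j:ℂ)) i * poch b₂ i * (j.factorial:ℂ) * (i.factorial:ℂ) *
            ((n-i-j).factorial:ℂ))
        = ((-1:ℂ)^i * poch a₁ i * poch (b₂-a₂) i / (poch b₁ i * poch b₂ i * (i.factorial:ℂ))) *
            ((-1:ℂ)^j * poch (b₁-a₁) j /
              (poch (b₁+(i:ℂ)) j * (j.factorial:ℂ) * ((n-i-j).factorial:ℂ))) := by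
      intro j _
      have key : poch b₁ j * poch (b₁+(j:ℂ)) i = poch b₁ i * poch (b₁+(i:ℂ)) j := by
        rw [← poch_add, ← poch_add, add_comm]
      rw [pow_add, key]
      field_simp
    rw [Finset.sum_congr rfl hstep, ← Finset.mul_sum]
    have hr : n + 1 - i = (n - i) + 1 := by omega
    rw [hr, vandermonde_div (n - i) (b₁ - a₁) (b₁ + (i:ℂ)) (hb₁i i)]
    have harg : b₁ + (i:ℂ) - (b₁ - a₁) = a₁ + (i:ℂ) := by ring
    rw [harg]
    have hsplita : poch a₁ n = poch a₁ i * poch (a₁ + (i:ℂ)) (n - i) := by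
      have h : i + (n - i) = n := by omega
      calc poch a₁ n = poch a₁ (i + (n-i)) := by rw [h]
      _ = poch a₁ i * poch (a₁ + i) (n - i) := poch_add a₁ i (n-i)
    have hsplitb : poch b₁ n = poch b₁ i * poch (b₁ + (i:ℂ)) (n - i) := by
      have h : i + (n - i) = n := by omega
      calc poch b₁ n = poch b₁ (i + (n-i)) := by rw [h]
      _ = poch b₁ i * poch (b₁ + i) (n - i) := poch_add b₁ i (n-i)
    rw [hsplita, hsplitb]
    field_simp [poch_ne_zero (hb₁i i), poch_ne_zero hb₁, poch_ne_zero hb₂, hfac]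
  rw [Finset.sum_congr rfl inner_eq, ← Finset.mul_sum]
  rw [vandermonde_div n (b₂ - a₂) b₂ hb₂]
  have harg : b₂ - (b₂ - a₂) = a₂ := by ring
  rw [harg]
  field_simp

lemma poch_one (n : ℕ) : poch 1 n = (n.factorial : ℂ) := by
  induction n with
  | zero => simp [poch_zero]
  | succ n ih => rw [poch_succ, ih, Nat.factorial_succ]; push_cast; ring

noncomputable def pt (a b c d z : ℂ) (i : ℕ) : ℂ :=
  poch a i * poch b i / (poch c i * poch d i) * z ^ i / (i.factorial : ℂ)

lemma norm_pt (a b c d z : ℂ) (i : ℕ) :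
    ‖pt a b c d z i‖ = ‖poch a i‖ * ‖poch b i‖ / (‖poch c i‖ * ‖poch d i‖) * ‖z‖ ^ i /
      (i.factorial : ℝ) := by
  rw [pt]
  rw [norm_div, norm_mul, norm_div, norm_mul, norm_mul, norm_pow]
  congr 1
  simp [Complex.norm_natCast]

lemma summable_ratio_aux {f : ℕ → ℝ} (hf : ∀ i, 0 ≤ f i) (C : ℝ)
    (h : ∀ᶠ i in atTop, f (i + 1) ≤ C / (i + 1) * f i) : Summable f := by
  apply summable_of_ratio_norm_eventually_le (r := 1/2) (by norm_num)
  filter_upwards [h, eventually_ge_atTop (⌈2 * C⌉₊)] with i hi hi2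
  rw [Real.norm_eq_abs, Real.norm_eq_abs, abs_of_nonneg (hf _), abs_of_nonneg (hf _)]
  refine hi.trans (mul_le_mul_of_nonneg_right ?_ (hf i))
  have h1 : (0:ℝ) < (i : ℝ) + 1 := by positivity
  rw [div_le_div_iff₀ h1 (by norm_num : (0:ℝ) < 2)]
  have h2 : 2 * C ≤ (⌈2 * C⌉₊ : ℝ) := Nat.le_ceil _
  have h3 : ((⌈2 * C⌉₊ : ℕ) : ℝ) ≤ (i : ℝ) := Nat.cast_le.mpr hi2
  nlinarith

lemma pt_succ (a b c d z : ℂ) (i : ℕ) (hc : c + (i:ℂ) ≠ 0) (hd : d + (i:ℂ) ≠ 0)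
    (hcp : poch c i ≠ 0) (hdp : poch d i ≠ 0) :
    pt a b c d z (i+1) = pt a b c d z i *
      ((a + i) * (b + i) * z / ((c + i) * (d + i) * ((i:ℂ) + 1))) := by
  rw [pt, pt, poch_succ, poch_succ, poch_succ, poch_succ, Nat.factorial_succ]
  have hfi : ((i.factorial : ℂ)) ≠ 0 := Nat.cast_ne_zero.mpr (Nat.factorial_ne_zero i)
  have : (((i+1) * i.factorial : ℕ) : ℂ) = ((i:ℂ)+1) * (i.factorial : ℂ) := by push_cast; ring
  rw [this, pow_succ]
  field_simp

lemma summable_norm_pt (a b c d z : ℂ) (hc : ∀ k : ℕ, c ≠ -(k : ℂ))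
    (hd : ∀ k : ℕ, d ≠ -(k : ℂ)) : Summable (fun i => ‖pt a b c d z i‖) := by
  apply summable_ratio_aux (fun i => norm_nonneg _) (64 * ‖z‖)
  have hcne : ∀ i : ℕ, c + (i:ℂ) ≠ 0 := by
    intro i h; exact hc i (by linear_combination h)
  have hdne : ∀ i : ℕ, d + (i:ℂ) ≠ 0 := by
    intro i h; exact hd i (by linear_combination h)
  filter_upwards [eventually_ge_atTop (⌈‖a‖⌉₊ + 1), eventually_ge_atTop (⌈‖b‖⌉₊ + 1),
    eventually_ge_atTop (⌈2*‖c‖⌉₊ + 1), eventually_ge_atTop (⌈2*‖d‖⌉₊ + 1)] with i ha hb hc2 hd2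
  have hia : ‖a‖ ≤ (i:ℝ) := le_trans (Nat.le_ceil _) (by exact_mod_cast Nat.le_of_succ_le ha)
  have hib : ‖b‖ ≤ (i:ℝ) := le_trans (Nat.le_ceil _) (by exact_mod_cast Nat.le_of_succ_le hb)
  have hic : 2*‖c‖ ≤ (i:ℝ) := le_trans (Nat.le_ceil _) (by exact_mod_cast Nat.le_of_succ_le hc2)
  have hid : 2*‖d‖ ≤ (i:ℝ) := le_trans (Nat.le_ceil _) (by exact_mod_cast Nat.le_of_succ_le hd2)
  have hi1 : (1:ℝ) ≤ (i:ℝ) := by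
    have : 1 ≤ i := by omega
    exact_mod_cast this
  rw [pt_succ a b c d z i (hcne i) (hdne i) (poch_ne_zero hc i) (poch_ne_zero hd i), norm_mul]
  rw [mul_comm (64 * ‖z‖ / (↑i + 1)) _]
  refine mul_le_mul_of_nonneg_left ?_ (norm_nonneg _)
  rw [norm_div, norm_mul, norm_mul, norm_mul, norm_mul]
  have hnorm1 : ‖(i:ℂ) + 1‖ = (i:ℝ) + 1 := by
    have : ((i:ℂ) + 1) = ((i+1 : ℕ) : ℂ) := by push_cast; ring
    rw [this, Complex.norm_natCast]; push_cast; ring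
  rw [hnorm1]
  have hub : ∀ u : ℂ, ‖u‖ ≤ (i:ℝ) → ‖u + (i:ℂ)‖ ≤ 2 * ((i:ℝ) + 1) := by
    intro u hu
    calc ‖u + (i:ℂ)‖ ≤ ‖u‖ + ‖(i:ℂ)‖ := norm_add_le _ _
    _ = ‖u‖ + (i:ℝ) := by rw [Complex.norm_natCast]
    _ ≤ 2 * ((i:ℝ) + 1) := by linarith
  have hlb : ∀ u : ℂ, 2*‖u‖ ≤ (i:ℝ) → ((i:ℝ) + 1) / 4 ≤ ‖u + (i:ℂ)‖ := by
    intro u hu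
    have : (i:ℝ) - ‖u‖ ≤ ‖u + (i:ℂ)‖ := by
      calc (i:ℝ) - ‖u‖ = ‖(i:ℂ)‖ - ‖-u‖ := by rw [Complex.norm_natCast, norm_neg]
      _ ≤ ‖(i:ℂ) - -u‖ := norm_sub_norm_le _ _
      _ = ‖u + (i:ℂ)‖ := by rw [sub_neg_eq_add, add_comm]
    have h2 : 0 ≤ ‖u‖ := norm_nonneg u
    linarith
  have h1 := hub a hia
  have h2 := hub b hib
  have h3 := hlb c hic
  have h4 := hlb d hid
  have hznn : (0:ℝ) ≤ ‖z‖ := norm_nonneg z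
  have hi4 : (0:ℝ) < ((i:ℝ)+1)/4 := by positivity
  calc ‖a + (i:ℂ)‖ * ‖b + (i:ℂ)‖ * ‖z‖ / (‖c + (i:ℂ)‖ * ‖d + (i:ℂ)‖ * ((i:ℝ) + 1))
      ≤ (2*((i:ℝ)+1)) * (2*((i:ℝ)+1)) * ‖z‖ / ((((i:ℝ)+1)/4) * (((i:ℝ)+1)/4) * ((i:ℝ)+1)) := by
        apply div_le_div₀ (by positivity)
        · apply mul_le_mul (mul_le_mul h1 h2 (norm_nonneg _) (by positivity)) le_rfl hznn
            (by positivity)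
        · positivity
        · apply mul_le_mul (mul_le_mul h3 h4 (by positivity) (norm_nonneg _)) le_rfl
            (by positivity) (by positivity)
  _ = 64 * ‖z‖ / ((i:ℝ) + 1) := by
        field_simp
        ring

lemma norm_one_poch (n : ℕ) : ‖poch 1 n‖ = (n.factorial : ℝ) := by
  rw [poch_one, Complex.norm_natCast]

lemma hyp_pair (a b c d z : ℂ) :
    (∑' i : ℕ, (([a,b].map (fun c => poch c i)).prod / (([c,d].map (fun c => poch c i)).prod))
      * z ^ i / (Nat.factorial i : ℂ)) = ∑' i, pt a b c d z i := by
  apply tsum_congr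
  intro i
  rw [pt]
  simp [List.map_cons, List.prod_cons, mul_one]

lemma one_ne_neg_nat : ∀ k : ℕ, (1:ℂ) ≠ -(k : ℂ) := by
  intro k h
  have h2 : (1:ℝ) = -(k:ℝ) := by exact_mod_cast congrArg Complex.re h
  have : (0:ℝ) ≤ (k:ℝ) := Nat.cast_nonneg k
  linarith

lemma norm_pt_mono (a b d z : ℂ) (c : ℂ) (hc : ∀ k : ℕ, (k:ℝ) + 1 ≤ ‖c + (k:ℂ)‖)
    (hd : ∀ i : ℕ, poch d i ≠ 0) (i : ℕ) :
    ‖pt a b c d z i‖ ≤ ‖pt a b 1 d z i‖ := by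
  rw [norm_pt, norm_pt, norm_one_poch]
  have h1 : (0:ℝ) < (i.factorial : ℝ) := by exact_mod_cast Nat.factorial_pos i
  have h2 : (i.factorial : ℝ) ≤ ‖poch c i‖ := norm_poch_ge hc i
  have h3 : (0:ℝ) < ‖poch d i‖ := norm_pos_iff.mpr (hd i)
  gcongr

/-- Generalized hypergeometric series with numerator list `a`, denominator list `b`. -/
noncomputable def hyp (a b : List ℂ) (z : ℂ) : ℂ :=
  ∑' i : ℕ, ((a.map (fun c => poch c i)).prod / (b.map (fun c => poch c i)).prod)
    * z ^ i / (Nat.factorial i : ℂ)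

/-- Partial sums `u_m = j₁ + ⋯ + j_m` of a `p`-tuple of nonnegative integers. -/
def U (p : ℕ) (j : Fin p → ℕ) (m : ℕ) : ℕ :=
  ∑ r ∈ Finset.range m, if h : r < p then j ⟨r, h⟩ else 0

noncomputable def outP (b₁ a₁ x : ℂ) (j : ℕ) : ℂ :=
  poch (b₁ - a₁) j / poch b₁ j * ((-x) ^ j / (j.factorial : ℂ))

noncomputable def FP (a₁ a₂ b₁ b₂ x : ℂ) (p : ℕ × ℕ) : ℂ :=
  outP b₁ a₁ x p.1 * pt a₁ (b₂ - a₂) (b₁ + (p.1 : ℂ)) b₂ (-x) p.2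

noncomputable def gP (a₁ a₂ b₁ b₂ x : ℂ) (n : ℕ) : ℂ :=
  ∑ p ∈ Finset.HasAntidiagonal.antidiagonal n, FP a₁ a₂ b₁ b₂ x p

lemma hyp_eq_tsum_pt (a b c d z : ℂ) : hyp [a, b] [c, d] z = ∑' i, pt a b c d z i := by
  rw [hyp]
  apply tsum_congr
  intro i
  rw [pt]
  simp [List.map_cons, List.prod_cons, mul_one]

theorem paris_kummer_twoFtwo (a₁ a₂ b₁ b₂ : ℂ)
    (hb₁ : ∀ n : ℕ, b₁ ≠ -(n : ℂ)) (hb₂ : ∀ n : ℕ, b₂ ≠ -(n : ℂ)) (x : ℂ) :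
    hyp [a₁, a₂] [b₁, b₂] x =
      Complex.exp x * ∑' j : ℕ,
        (poch (b₁ - a₁) j / poch b₁ j) * ((-x) ^ j / (Nat.factorial j : ℂ)) *
          hyp [a₁, b₂ - a₂] [b₁ + (j : ℂ), b₂] (-x) := by
  classical
  have hfacC : ∀ m : ℕ, ((m.factorial : ℂ)) ≠ 0 :=
    fun m => Nat.cast_ne_zero.mpr (Nat.factorial_ne_zero m)
  have hb₁i : ∀ (j : ℕ) (k : ℕ), b₁ + (j:ℂ) ≠ -(k:ℂ) := by
    intro j k h; exact hb₁ (k + j) (by push_cast; linear_combination h)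
  have hout_pt : ∀ j, outP b₁ a₁ x j = pt (b₁ - a₁) 1 b₁ 1 (-x) j := by
    intro j
    rw [outP, pt, poch_one, mul_div_mul_right _ _ (hfacC j), mul_div_assoc]
  have hout_summ : Summable (fun j => ‖outP b₁ a₁ x j‖) := by
    refine Summable.congr (summable_norm_pt (b₁ - a₁) 1 b₁ 1 (-x) hb₁ one_ne_neg_nat) ?_
    intro j
    rw [hout_pt j]
  have hinn_summ : ∀ j : ℕ, Summable (fun i => ‖pt a₁ (b₂ - a₂) (b₁ + (j:ℂ)) b₂ (-x) i‖) :=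
    fun j => summable_norm_pt _ _ _ _ _ (hb₁i j) hb₂
  set N₀ : ℕ := ⌈‖b₁‖⌉₊ + 1 with hN₀def
  have hshift : ∀ j : ℕ, N₀ ≤ j → ∀ k : ℕ, (k:ℝ) + 1 ≤ ‖(b₁ + (j:ℂ)) + (k:ℂ)‖ := by
    intro j hj k
    have h1 : ‖b₁‖ + 1 ≤ (j:ℝ) := by
      have h2 : ((⌈‖b₁‖⌉₊ + 1 : ℕ) : ℝ) ≤ (j:ℝ) := Nat.cast_le.mpr hj
      have h3 := Nat.le_ceil ‖b₁‖
      push_cast at h2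
      linarith
    have hnrm : ((j:ℝ) + k) = ‖((j:ℂ) + (k:ℂ))‖ := by
      have hc : ((j:ℂ) + (k:ℂ)) = ((j + k : ℕ) : ℂ) := by push_cast; ring
      rw [hc, Complex.norm_natCast]; push_cast; ring
    have h3 : ((j:ℝ) + k) - ‖b₁‖ ≤ ‖b₁ + (j:ℂ) + (k:ℂ)‖ := by
      calc ((j:ℝ) + k) - ‖b₁‖ = ‖(j:ℂ)+(k:ℂ)‖ - ‖-b₁‖ := by rw [← hnrm, norm_neg]
      _ ≤ ‖((j:ℂ)+(k:ℂ)) - (-b₁)‖ := norm_sub_norm_le _ _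
      _ = ‖b₁ + (j:ℂ) + (k:ℂ)‖ := by congr 1; ring
    linarith
  have hA_summ : Summable (fun i => ‖pt a₁ (b₂ - a₂) 1 b₂ (-x) i‖) :=
    summable_norm_pt _ _ _ _ _ one_ne_neg_nat hb₂
  have hinn_le : ∀ j : ℕ, N₀ ≤ j → ∀ i,
      ‖pt a₁ (b₂ - a₂) (b₁ + (j:ℂ)) b₂ (-x) i‖ ≤ ‖pt a₁ (b₂ - a₂) 1 b₂ (-x) i‖ :=
    fun j hj i => norm_pt_mono _ _ _ _ _ (hshift j hj) (poch_ne_zero hb₂) i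
  have hFnorm_eq : ∀ p : ℕ × ℕ, ‖FP a₁ a₂ b₁ b₂ x p‖
      = ‖outP b₁ a₁ x p.1‖ * ‖pt a₁ (b₂ - a₂) (b₁ + (p.1:ℂ)) b₂ (-x) p.2‖ := by
    intro p; rw [FP, norm_mul]
  have hFn : Summable (fun p : ℕ × ℕ => ‖FP a₁ a₂ b₁ b₂ x p‖) := by
    apply (summable_prod_of_nonneg (fun p => norm_nonneg _)).mpr
    constructor
    · intro j
      refine Summable.congr ((hinn_summ j).mul_left ‖outP b₁ a₁ x j‖) ?_
      intro i
      exact (hFnorm_eq (j, i)).symm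
    · have hbound : ∀ j : ℕ, (∑' i, ‖FP a₁ a₂ b₁ b₂ x (j + N₀, i)‖)
          ≤ ‖outP b₁ a₁ x (j + N₀)‖ * (∑' i, ‖pt a₁ (b₂ - a₂) 1 b₂ (-x) i‖) := by
        intro j
        have he : (fun i => ‖FP a₁ a₂ b₁ b₂ x (j + N₀, i)‖)
            = fun i => ‖outP b₁ a₁ x (j + N₀)‖ *
                ‖pt a₁ (b₂ - a₂) (b₁ + ((j + N₀ : ℕ):ℂ)) b₂ (-x) i‖ := by
          funext i; exact hFnorm_eq (j + N₀, i)
        rw [he, tsum_mul_left]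
        refine mul_le_mul_of_nonneg_left ?_ (norm_nonneg _)
        exact Summable.tsum_le_tsum (fun i => hinn_le (j + N₀) (Nat.le_add_left _ _) i)
          (hinn_summ (j + N₀)) hA_summ
      apply (summable_nat_add_iff N₀).mp
      refine Summable.of_nonneg_of_le (fun j => tsum_nonneg (fun i => norm_nonneg _)) hbound ?_
      exact ((summable_nat_add_iff N₀).mpr hout_summ).mul_right _
  have hFsum : Summable (FP a₁ a₂ b₁ b₂ x) := Summable.of_norm hFn
  have hsigma : ∑' p : ℕ × ℕ, FP a₁ a₂ b₁ b₂ x p = ∑' n, gP a₁ a₂ b₁ b₂ x n := by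
    simp only [gP]
    conv_rhs => congr; ext n; rw [← Finset.sum_finset_coe, ← tsum_fintype (L := .unconditional _)]
    rw [← Finset.HasAntidiagonal.sigmaAntidiagonalEquivProd.tsum_eq (FP a₁ a₂ b₁ b₂ x)]
    exact Summable.tsum_sigma' (fun n => (hasSum_fintype _).summable)
      (Finset.HasAntidiagonal.sigmaAntidiagonalEquivProd.summable_iff.mpr hFsum)
  have hGn_summ : Summable (fun n => ∑ p ∈ Finset.HasAntidiagonal.antidiagonal n, ‖FP a₁ a₂ b₁ b₂ x p‖) := by
    conv => congr; ext; rw [← Finset.sum_finset_coe, ← tsum_fintype (L := .unconditional _)]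
    exact (Finset.HasAntidiagonal.sigmaAntidiagonalEquivProd.summable_iff.mpr hFn).sigma'
      fun n => (hasSum_fintype _).summable
  have hgn : Summable (fun n => ‖gP a₁ a₂ b₁ b₂ x n‖) :=
    Summable.of_nonneg_of_le (fun n => norm_nonneg _)
      (fun n => norm_sum_le _ _) hGn_summ
  have hexp : Complex.exp x = ∑' k : ℕ, x ^ k / (k.factorial : ℂ) := by
    rw [Complex.exp_eq_exp_ℂ, NormedSpace.exp_eq_tsum_div]
  have hexpn : Summable (fun k : ℕ => ‖x ^ k / (k.factorial : ℂ)‖) := by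
    refine Summable.congr (Real.summable_pow_div_factorial ‖x‖) ?_
    intro k
    rw [norm_div, norm_pow, Complex.norm_natCast]
  have hR : (∑' j : ℕ, (poch (b₁ - a₁) j / poch b₁ j) * ((-x) ^ j / (Nat.factorial j : ℂ)) *
        hyp [a₁, b₂ - a₂] [b₁ + (j : ℂ), b₂] (-x)) = ∑' n, gP a₁ a₂ b₁ b₂ x n := by
    rw [← hsigma, hFsum.tsum_prod]
    apply tsum_congr
    intro j
    have h1 : hyp [a₁, b₂ - a₂] [b₁ + (j:ℂ), b₂] (-x)
        = ∑' i, pt a₁ (b₂ - a₂) (b₁ + (j:ℂ)) b₂ (-x) i :=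
      hyp_eq_tsum_pt a₁ (b₂ - a₂) (b₁ + (j:ℂ)) b₂ (-x)
    rw [h1, ← tsum_mul_left]
    apply tsum_congr
    intro i
    rw [FP, outP]
  have hcoeff : ∀ n : ℕ, ∑ kl ∈ Finset.HasAntidiagonal.antidiagonal n,
      x ^ kl.1 / (kl.1.factorial : ℂ) * gP a₁ a₂ b₁ b₂ x kl.2 = pt a₁ a₂ b₁ b₂ x n := by
    intro n
    rw [Finset.Nat.sum_antidiagonal_eq_sum_range_succ_mk]
    rw [← Finset.sum_range_reflect (fun k => x ^ k / (k.factorial : ℂ) * gP a₁ a₂ b₁ b₂ x (n - k))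
      (n+1)]
    simp only [Nat.add_sub_cancel]
    have hstep2 : ∀ m ∈ range (n+1), x ^ (n-m) / ((n-m).factorial : ℂ) * gP a₁ a₂ b₁ b₂ x (n - (n-m))
        = x ^ n * ∑ i ∈ range (m+1),
          (-1:ℂ)^(i+(m-i)) * poch (b₁-a₁) (m-i) * poch a₁ i * poch (b₂-a₂) i /
            (poch b₁ (m-i) * poch (b₁+((m-i:ℕ)):ℂ) i * poch b₂ i * ((m-i).factorial:ℂ) *
              (i.factorial:ℂ) * ((n-i-(m-i)).factorial:ℂ)) := by
      intro m hm
      have hmn : m ≤ n := by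
        have := Finset.mem_range.mp hm; omega
      have hnn : n - (n - m) = m := by omega
      rw [hnn, gP, Finset.Nat.sum_antidiagonal_eq_sum_range_succ_mk]
      rw [← Finset.sum_range_reflect (fun j => FP a₁ a₂ b₁ b₂ x (j, m - j)) (m+1)]
      simp only [Nat.add_sub_cancel]
      rw [Finset.mul_sum, Finset.mul_sum]
      apply Finset.sum_congr rfl
      intro i hi
      have him : i ≤ m := by
        have := Finset.mem_range.mp hi; omega
      have h1 : m - (m - i) = i := by omega
      rw [h1, FP, outP, pt]
      have e2 : n - i - (m - i) = n - m := by omega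
      rw [e2]
      have hx1 : (-x) ^ (m - i) = (-1:ℂ)^(m-i) * x^(m-i) := by rw [neg_pow]
      have hx2 : (-x) ^ i = (-1:ℂ)^i * x^i := by rw [neg_pow]
      have hxn : x ^ n = x^(n-m) * x^(m-i) * x^i := by
        rw [← pow_add, ← pow_add]
        congr 1
        omega
      have hpow : (-1:ℂ)^(i+(m-i)) = (-1:ℂ)^i * (-1:ℂ)^(m-i) := pow_add _ _ _
      rw [hx1, hx2, hxn, hpow]
      have d1 : poch b₁ (m-i) ≠ 0 := poch_ne_zero hb₁ _
      have d2 : poch (b₁+((m-i:ℕ)):ℂ) i ≠ 0 := poch_ne_zero (hb₁i (m-i)) _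
      have d3 : poch b₂ i ≠ 0 := poch_ne_zero hb₂ _
      field_simp
    rw [Finset.sum_congr rfl hstep2, ← Finset.mul_sum]
    rw [coeff_id a₁ a₂ b₁ b₂ hb₁ hb₂ n]
    rw [pt]
    have d1 : poch b₁ n ≠ 0 := poch_ne_zero hb₁ n
    have d2 : poch b₂ n ≠ 0 := poch_ne_zero hb₂ n
    field_simp
  calc hyp [a₁, a₂] [b₁, b₂] x = ∑' n, pt a₁ a₂ b₁ b₂ x n := hyp_eq_tsum_pt a₁ a₂ b₁ b₂ x
  _ = ∑' n, ∑ kl ∈ Finset.HasAntidiagonal.antidiagonal n,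
        x ^ kl.1 / (kl.1.factorial : ℂ) * gP a₁ a₂ b₁ b₂ x kl.2 :=
      tsum_congr (fun n => (hcoeff n).symm)
  _ = (∑' k : ℕ, x ^ k / (k.factorial : ℂ)) * ∑' n, gP a₁ a₂ b₁ b₂ x n :=
      (tsum_mul_tsum_eq_tsum_sum_antidiagonal_of_summable_norm hexpn hgn).symm
  _ = Complex.exp x * ∑' j : ℕ,
        (poch (b₁ - a₁) j / poch b₁ j) * ((-x) ^ j / (Nat.factorial j : ℂ)) *
          hyp [a₁, b₂ - a₂] [b₁ + (j : ℂ), b₂] (-x) := by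
      rw [← hexp, hR]
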